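/- arXiv:2307.09276 — 2 statements merged into one kernel-verified Lean document; each statement's English description precedes it below -/
import Mathlib

section
/- For all real r > 0, k > 0 and α > k, the improper integral ∫_{α}^{∞} J_0(s r) · s/(s² − k²) ds converges, i.e. lim_{T→∞} ∫_{α}^{T} J_0(s r) · s/(s² − k²) ds exists in ℝ. (Well-definedness of the tail term in the dynamic filtered kernel g^α of Eq. (8), which requires α > k.) -/
/-!
Poisson's integral `J₀(x) = π⁻¹ ∫₀^π cos (x sin θ) dθ` and its companion
`J₁(x) = π⁻¹ ∫₀^π sin θ sin (x sin θ) dθ` give `|J₁| ≤ 1` and `(x J₁(x))' = x J₀(x)`, the latter by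
one integration by parts in `θ`. Hence `s J₀(s r) = u'(s)` with `u(s) = s J₁(s r) / r = O(s)`.
Integrating by parts against `v(s) = (s² - k²)⁻¹`, which is smooth on `[α, ∞)` because `α > k`,
the boundary term `u v = O(1/s)` tends to `0` and `u v' = O(1/s²)` is integrable on `(α, ∞)`.
-/

open MeasureTheory Real Filter intervalIntegral

/-- Bessel function of the first kind of order 0,
`J₀(x) = ∑ (−1)^m (x/2)^{2m} / (m!)²`. -/
noncomputable def J0 (x : ℝ) : ℝ :=
  ∑' m : ℕ, (-1 : ℝ) ^ m * (x / 2) ^ (2 * m) / ((Nat.factorial m : ℝ)) ^ 2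

open Set Topology

theorem tendsto_integral_deriv_mul_of_integrableOn_mul_deriv {u v u' v' : ℝ → ℝ} {a l : ℝ}
    (hu : ∀ x ∈ Ici a, HasDerivAt u (u' x) x) (hv : ∀ x ∈ Ici a, HasDerivAt v (v' x) x)
    (hu' : ContinuousOn u' (Ici a)) (hv' : ContinuousOn v' (Ici a))
    (huv : Tendsto (u * v) atTop (𝓝 l)) (huv' : IntegrableOn (u * v') (Ioi a)) :
    Tendsto (fun T => ∫ x in a..T, u' x * v x) atTop
      (𝓝 (l - u a * v a - ∫ x in Ioi a, u x * v' x)) := by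
  have hparts : ∀ᶠ T in atTop, u T * v T - u a * v a - ∫ x in a..T, u x * v' x =
      ∫ x in a..T, u' x * v x := by
    filter_upwards [eventually_ge_atTop a] with T hT
    have hsub : uIcc a T ⊆ Ici a := by simp [uIcc_of_le hT, Icc_subset_Ici_self]
    rw [integral_mul_deriv_eq_deriv_mul (fun x hx => hu x (hsub hx))
      (fun x hx => hv x (hsub hx)) ((hu'.mono hsub).intervalIntegrable)
      ((hv'.mono hsub).intervalIntegrable)]
    ring
  exact ((huv.sub_const _).sub (intervalIntegral_tendsto_integral_Ioi a huv' tendsto_id)).congr'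
    hparts

theorem prod_range_wallis_eq_factorial (m : ℕ) :
    ∏ i ∈ Finset.range m, (2 * (i : ℝ) + 1) / (2 * i + 2) =
      (2 * m).factorial / (4 ^ m * (m.factorial : ℝ) ^ 2) := by
  induction m with
  | zero => simp
  | succ n ih =>
    rw [Finset.prod_range_succ, ih, show 2 * (n + 1) = 2 * n + 1 + 1 by ring,
      Nat.factorial_succ, Nat.factorial_succ, Nat.factorial_succ]
    push_cast
    field_simp
    ring

theorem integral_sin_pow_even_eq_factorial (m : ℕ) :
    ∫ θ in 0..π, sin θ ^ (2 * m) =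
      π * ((2 * m).factorial / (4 ^ m * (m.factorial : ℝ) ^ 2)) := by
  rw [integral_sin_pow_even, prod_range_wallis_eq_factorial]

/-- Integrate the cosine series term by term, evaluating `∫ sin^(2m)` by Wallis' formula. -/
theorem J0_eq_integral (x : ℝ) : J0 x = π⁻¹ * ∫ θ in 0..π, cos (x * sin θ) := by
  let f : ℕ → C(ℝ, ℝ) := fun m =>
    ⟨fun θ => (-1) ^ m * x ^ (2 * m) / ((2 * m).factorial : ℝ) * sin θ ^ (2 * m), by fun_prop⟩
  have hsummable : Summable fun m =>
      ‖(f m).restrict (⟨uIcc 0 π, isCompact_uIcc⟩ : TopologicalSpace.Compacts ℝ)‖ := by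
    have hbound : Summable fun m : ℕ => |x| ^ (2 * m) / ((2 * m).factorial : ℝ) :=
      (summable_pow_div_factorial |x|).comp_injective (fun a b h => by omega)
    refine hbound.of_nonneg_of_le (fun m => norm_nonneg _) (fun m => ?_)
    refine (ContinuousMap.norm_le _ (by positivity)).2 fun θ => ?_
    simp only [ContinuousMap.restrict_apply, f, ContinuousMap.coe_mk,
      norm_mul, norm_div, norm_pow, norm_neg, norm_one, one_pow, one_mul,
      Real.norm_eq_abs, Nat.abs_cast]
    exact mul_le_of_le_one_right (by positivity) (pow_le_one₀ (abs_nonneg _) (abs_sin_le_one _))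
  have hseries : ∀ θ, ∑' m, f m θ = cos (x * sin θ) := fun θ => by
    rw [cos_eq_tsum]
    congr 1 with m
    simp only [f, ContinuousMap.coe_mk]
    ring
  have hterm : ∀ m, ∫ θ in 0..π, f m θ =
      π * ((-1 : ℝ) ^ m * (x / 2) ^ (2 * m) / (m.factorial : ℝ) ^ 2) := by
    intro m
    simp only [f, ContinuousMap.coe_mk]
    rw [intervalIntegral.integral_const_mul, integral_sin_pow_even_eq_factorial, div_pow,
      pow_mul (2 : ℝ)]
    field_simp
    norm_num
  have := hasSum_intervalIntegral_of_summable_norm hsummable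
  simp only [hterm, hseries] at this
  rw [J0, ← (this.mul_left π⁻¹).tsum_eq]
  simp [pi_ne_zero]

@[fun_prop]
theorem continuous_J0 : Continuous J0 := by
  rw [funext J0_eq_integral]
  exact continuous_const.mul
    (continuous_parametric_intervalIntegral_of_continuous' (by fun_prop) _ _)

/-- The Bessel function `J₁ = -J₀'`, in Poisson's integral form. -/
noncomputable def J1 (x : ℝ) : ℝ := π⁻¹ * ∫ θ in 0..π, sin θ * sin (x * sin θ)

@[fun_prop]
theorem continuous_J1 : Continuous J1 :=
  continuous_const.mul (continuous_parametric_intervalIntegral_of_continuous' (by fun_prop) _ _)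

theorem abs_J1_le_one (x : ℝ) : |J1 x| ≤ 1 := by
  have hint := intervalIntegral.norm_integral_le_of_norm_le_const (a := 0) (b := π) (C := 1)
    (f := fun θ => sin θ * sin (x * sin θ)) fun θ _ => by
      rw [norm_mul, Real.norm_eq_abs, Real.norm_eq_abs]
      exact mul_le_one₀ (abs_sin_le_one θ) (abs_nonneg _) (abs_sin_le_one _)
  rw [Real.norm_eq_abs, sub_zero, abs_of_pos pi_pos, one_mul] at hint
  rw [J1, abs_mul, abs_inv, abs_of_pos pi_pos]
  exact inv_mul_le_one_of_le₀ hint pi_pos.le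

theorem hasDerivAt_J1 (x : ℝ) :
    HasDerivAt J1 (π⁻¹ * ∫ θ in 0..π, sin θ ^ 2 * cos (x * sin θ)) x := by
  have hderiv : ∀ y θ,
      HasDerivAt (fun y => sin θ * sin (y * sin θ)) (sin θ ^ 2 * cos (y * sin θ)) y :=
    fun y θ => (((hasDerivAt_mul_const (sin θ)).sin).const_mul (sin θ)).congr_deriv (by ring)
  refine (hasDerivAt_integral_of_dominated_loc_of_deriv_le (bound := fun _ => 1)
    (Metric.ball_mem_nhds x one_pos) (Eventually.of_forall fun y => by fun_prop)
    (Continuous.intervalIntegrable (by fun_prop) _ _) (by fun_prop)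
    (ae_of_all _ fun θ _ y _ => ?_) intervalIntegrable_const
    (ae_of_all _ fun θ _ y _ => hderiv y θ)).2.const_mul π⁻¹
  rw [norm_mul, norm_pow, Real.norm_eq_abs, Real.norm_eq_abs]
  exact mul_le_one₀ (pow_le_one₀ (abs_nonneg _) (abs_sin_le_one θ)) (abs_nonneg _)
    (abs_cos_le_one _)

theorem integral_sin_mul_sin_mul_sin (x : ℝ) :
    ∫ θ in 0..π, sin θ * sin (x * sin θ) = x * ∫ θ in 0..π, cos θ ^ 2 * cos (x * sin θ) := by
  have hparts := integral_mul_deriv_eq_deriv_mul (a := 0) (b := π) (v := cos)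
    (u' := fun θ => cos (x * sin θ) * (x * cos θ))
    (fun θ _ => ((hasDerivAt_sin θ).const_mul x).sin) (fun θ _ => hasDerivAt_cos θ)
    (Continuous.intervalIntegrable (by fun_prop) _ _)
    (Continuous.intervalIntegrable (by fun_prop) _ _)
  simp only [sin_zero, sin_pi, mul_zero, zero_mul, sub_zero, zero_sub] at hparts
  calc ∫ θ in 0..π, sin θ * sin (x * sin θ)
      = -∫ θ in 0..π, sin (x * sin θ) * -sin θ := by
        rw [← intervalIntegral.integral_neg]; congr 1 with θ; ring
    _ = ∫ θ in 0..π, cos (x * sin θ) * (x * cos θ) * cos θ := by rw [hparts, neg_neg]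
    _ = x * ∫ θ in 0..π, cos θ ^ 2 * cos (x * sin θ) := by
        rw [← intervalIntegral.integral_const_mul]; congr 1 with θ; ring

theorem hasDerivAt_mul_J1 (x : ℝ) : HasDerivAt (fun x => x * J1 x) (x * J0 x) x := by
  refine ((hasDerivAt_id' x).mul (hasDerivAt_J1 x)).congr_deriv ?_
  have hpyth : (∫ θ in 0..π, cos θ ^ 2 * cos (x * sin θ)) +
      ∫ θ in 0..π, sin θ ^ 2 * cos (x * sin θ) = ∫ θ in 0..π, cos (x * sin θ) := by
    rw [← integral_add (Continuous.intervalIntegrable (by fun_prop) _ _)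
      (Continuous.intervalIntegrable (by fun_prop) _ _)]
    congr 1 with θ
    linear_combination cos (x * sin θ) * cos_sq_add_sin_sq θ
  rw [J0_eq_integral, J1, integral_sin_mul_sin_mul_sin, ← hpyth]
  ring

theorem hasDerivAt_mul_J1_mul_div {r : ℝ} (hr : r ≠ 0) (s : ℝ) :
    HasDerivAt (fun s => s * J1 (s * r) / r) (s * J0 (s * r)) s := by
  have h := ((hasDerivAt_mul_J1 (s * r)).comp s (hasDerivAt_mul_const r)).div_const (r ^ 2)
  have hu : (fun s => s * J1 (s * r) / r) = fun s => s * r * J1 (s * r) / r ^ 2 := by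
    funext s
    field_simp
  rw [hu]
  exact h.congr_deriv (by field_simp)

section Tail

variable {r k α : ℝ}

theorem abs_inv_sq_sub_sq_le (hk : 0 < k) (hα : k < α) {s : ℝ} (hs : α ≤ s) :
    |(s ^ 2 - k ^ 2)⁻¹| ≤ α ^ 2 / (α ^ 2 - k ^ 2) * (s ^ 2)⁻¹ := by
  have hα0 : 0 < α := hk.trans hα
  have hs0 : 0 < s := hα0.trans_le hs
  have hαk : 0 < α ^ 2 - k ^ 2 := by nlinarith
  have hsk : 0 < s ^ 2 - k ^ 2 := by nlinarith
  rw [abs_of_pos (inv_pos.2 hsk), show α ^ 2 / (α ^ 2 - k ^ 2) * (s ^ 2)⁻¹ =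
    (s ^ 2 * (α ^ 2 - k ^ 2) / α ^ 2)⁻¹ by field_simp]
  refine inv_anti₀ (div_pos (mul_pos (pow_pos hs0 2) hαk) (pow_pos hα0 2)) ?_
  rw [div_le_iff₀ (pow_pos hα0 2)]
  nlinarith [mul_le_mul_of_nonneg_left (pow_le_pow_left₀ hα0.le hs 2) (sq_nonneg k)]

theorem abs_mul_J1_div_le (hr : 0 < r) {s : ℝ} (hs : 0 ≤ s) : |s * J1 (s * r) / r| ≤ s / r := by
  rw [abs_div, abs_mul, abs_of_nonneg hs, abs_of_pos hr]
  gcongr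
  exact mul_le_of_le_one_right hs (abs_J1_le_one _)

theorem tendsto_mul_J1_div_mul_inv_sq_sub_sq (hr : 0 < r) (hk : 0 < k) (hα : k < α) :
    Tendsto (fun s => s * J1 (s * r) / r * (s ^ 2 - k ^ 2)⁻¹) atTop (𝓝 0) := by
  set C := α ^ 2 / (α ^ 2 - k ^ 2)
  have hlim : Tendsto (fun s : ℝ => C / r * s⁻¹) atTop (𝓝 0) := by
    simpa using tendsto_inv_atTop_zero.const_mul (C / r)
  refine squeeze_zero_norm' ?_ hlim
  filter_upwards [eventually_ge_atTop α, eventually_gt_atTop 0] with s hs hs0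
  rw [Real.norm_eq_abs, abs_mul]
  calc |s * J1 (s * r) / r| * |(s ^ 2 - k ^ 2)⁻¹| ≤ s / r * (C * (s ^ 2)⁻¹) :=
        mul_le_mul (abs_mul_J1_div_le hr hs0.le) (abs_inv_sq_sub_sq_le hk hα hs)
          (abs_nonneg _) (by positivity)
    _ = C / r * s⁻¹ := by field_simp

theorem integrableOn_mul_J1_div_mul_deriv_inv_sq_sub_sq (hr : 0 < r) (hk : 0 < k) (hα : k < α) :
    IntegrableOn (fun s => s * J1 (s * r) / r * (-(2 * s) / (s ^ 2 - k ^ 2) ^ 2)) (Ioi α) := by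
  set C := α ^ 2 / (α ^ 2 - k ^ 2)
  have hα0 : 0 < α := hk.trans hα
  have hbound : IntegrableOn (fun s : ℝ => 2 * C ^ 2 / r * s ^ (-2 : ℝ)) (Ioi α) :=
    (integrableOn_Ioi_rpow_of_lt (by norm_num) hα0).const_mul _
  refine hbound.mono' ?_ ?_
  · refine ContinuousOn.aestronglyMeasurable ?_ measurableSet_Ioi
    refine ContinuousOn.mul (by fun_prop) (ContinuousOn.div (by fun_prop) (by fun_prop) ?_)
    intro s hs
    have : 0 < s ^ 2 - k ^ 2 := by nlinarith [mem_Ioi.1 hs]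
    positivity
  · filter_upwards [ae_restrict_mem measurableSet_Ioi] with s hs
    have hs0 : 0 < s := hα0.trans hs
    rw [Real.norm_eq_abs, abs_mul, div_eq_mul_inv _ ((_ : ℝ) ^ 2), abs_mul, ← inv_pow, abs_pow,
      abs_neg, abs_of_pos (by positivity : (0 : ℝ) < 2 * s), rpow_neg hs0.le, rpow_two]
    calc |s * J1 (s * r) / r| * (2 * s * |(s ^ 2 - k ^ 2)⁻¹| ^ 2)
        ≤ s / r * (2 * s * (C * (s ^ 2)⁻¹) ^ 2) := by
          gcongr
          · exact abs_mul_J1_div_le hr hs0.le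
          · exact abs_inv_sq_sub_sq_le hk hα hs.le
      _ = 2 * C ^ 2 / r * (s ^ 2)⁻¹ := by field_simp

end Tail

/-- Convergence of the tail integral `∫_α^∞ J₀(s r) · s/(s²−k²) ds` for `r > 0`, `k > 0`, `α > k`. -/
theorem dynamic_tail_converges (r k α : ℝ) (hr : 0 < r) (hk : 0 < k) (hα : k < α) :
    ∃ L : ℝ, Tendsto (fun T : ℝ => ∫ s in α..T, J0 (s * r) * (s / (s ^ 2 - k ^ 2)))
      atTop (nhds L) := by
  have hden : ∀ s ∈ Ici α, s ^ 2 - k ^ 2 ≠ 0 := fun s hs => by nlinarith [mem_Ici.1 hs]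
  have hv : ∀ s ∈ Ici α,
      HasDerivAt (fun s => (s ^ 2 - k ^ 2)⁻¹) (-(2 * s) / (s ^ 2 - k ^ 2) ^ 2) s :=
    fun s hs =>
      (((hasDerivAt_pow 2 s).sub_const (k ^ 2)).inv (hden s hs)).congr_deriv (by norm_num)
  have hv' : ContinuousOn (fun s => -(2 * s) / (s ^ 2 - k ^ 2) ^ 2) (Ici α) :=
    ContinuousOn.div (by fun_prop) (by fun_prop) fun s hs => pow_ne_zero 2 (hden s hs)
  have hparts := tendsto_integral_deriv_mul_of_integrableOn_mul_deriv
    (fun s _ => hasDerivAt_mul_J1_mul_div hr.ne' s) hv (by fun_prop) hv'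
    (tendsto_mul_J1_div_mul_inv_sq_sub_sq hr hk hα)
    (integrableOn_mul_J1_div_mul_deriv_inv_sq_sub_sq hr hk hα)
  refine ⟨_, hparts.congr fun T => ?_⟩
  congr 1 with s
  ring
end

section
/- Let 1 ≤ c₁ < c₂ be real numbers and k a real number. Then the function t ↦ cos(k t)/√(t² − 1) is integrable on (c₁, c₂) (even when c₁ = 1, where the singularity is integrable), the function t ↦ sin(k t) · log(t + √(t² − 1)) is integrable on (c₁, c₂), and ∫_{c₁}^{c₂} cos(k t)/√(t² − 1) dt = cos(k c₂) log(c₂ + √(c₂² − 1)) − cos(k c₁) log(c₁ + √(c₁² − 1)) + k ∫_{c₁}^{c₂} sin(k t) · log(t + √(t² − 1)) dt. (The integration-by-parts formula, Eq. (15) of the paper, used on the interval (1,2) where log(t + √(t² − 1)) is not singular at t = 1.) -/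
open MeasureTheory Real intervalIntegral Set

lemma Ioo_min_max_subset_Ioi {α : Type*} [LinearOrder α] {a b c : α} (ha : c ≤ a) (hb : c ≤ b) :
    Ioo (min a b) (max a b) ⊆ Ioi c :=
  fun _ hx => (le_min ha hb).trans_lt hx.1

lemma uIcc_subset_Ici_of_le {α : Type*} [Lattice α] {a b c : α} (ha : c ≤ a) (hb : c ≤ b) :
    uIcc a b ⊆ Ici c :=
  fun _ hx => (le_inf ha hb).trans hx.1

/-- The singularity at `1` is integrable because `arcosh`, continuous on `[1, ∞)`, is an
antiderivative with nonnegative derivative. -/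
theorem intervalIntegrable_inv_sqrt_sq_sub_one {a b : ℝ} (ha : 1 ≤ a) (hb : 1 ≤ b) :
    IntervalIntegrable (fun t => (√(t ^ 2 - 1))⁻¹) volume a b :=
  intervalIntegrable_deriv_of_nonneg (continuousOn_arcosh.mono (uIcc_subset_Ici_of_le ha hb))
    (fun _ hx => hasDerivAt_arcosh (Ioo_min_max_subset_Ioi ha hb hx))
    (fun _ _ => by positivity)

theorem intervalIntegrable_cos_mul_div_sqrt_sq_sub_one (k : ℝ) {a b : ℝ} (ha : 1 ≤ a)
    (hb : 1 ≤ b) : IntervalIntegrable (fun t => cos (k * t) / √(t ^ 2 - 1)) volume a b := by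
  simpa only [div_eq_mul_inv] using (intervalIntegrable_inv_sqrt_sq_sub_one ha hb).continuousOn_mul
    (by fun_prop)

theorem integral_cos_mul_div_sqrt_sq_sub_one (k : ℝ) {a b : ℝ} (ha : 1 ≤ a) (hb : 1 ≤ b) :
    ∫ t in a..b, cos (k * t) / √(t ^ 2 - 1) =
      cos (k * b) * arcosh b - cos (k * a) * arcosh a + k * ∫ t in a..b, sin (k * t) * arcosh t := by
  have hcos : ∀ x, HasDerivAt (fun t => cos (k * t)) (-(k * sin (k * x))) x := fun x => by
    simpa [mul_comm] using ((hasDerivAt_id x).const_mul k).cos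
  have hparts := integral_mul_deriv_eq_deriv_mul_of_hasDerivAt
    (by fun_prop)
    (continuousOn_arcosh.mono (uIcc_subset_Ici_of_le ha hb))
    (fun x _ => hcos x)
    (fun _ hx => hasDerivAt_arcosh (Ioo_min_max_subset_Ioi ha hb hx))
    ((by fun_prop : Continuous fun x => -(k * sin (k * x))).intervalIntegrable _ _)
    (intervalIntegrable_inv_sqrt_sq_sub_one ha hb)
  simp only [← div_eq_mul_inv, neg_mul, mul_assoc, intervalIntegral.integral_neg,
    intervalIntegral.integral_const_mul] at hparts
  rw [hparts, sub_neg_eq_add]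

/-- The integration-by-parts formula for the truncated Mehler–Sonine integral:
for `1 ≤ c₁ < c₂`, both `t ↦ cos(kt)/√(t²−1)` and `t ↦ sin(kt) log(t+√(t²−1))` are
integrable on `(c₁,c₂)` and
`∫ cos(kt)/√(t²−1) = [cos(kt) log(t+√(t²−1))]_{c₁}^{c₂} + k ∫ sin(kt) log(t+√(t²−1))`. -/
theorem mehler_sonine_integration_by_parts (c₁ c₂ k : ℝ) (h1 : 1 ≤ c₁) (h12 : c₁ < c₂) :
    IntegrableOn (fun t : ℝ => Real.cos (k * t) / Real.sqrt (t ^ 2 - 1)) (Set.Ioo c₁ c₂) ∧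
    IntegrableOn (fun t : ℝ => Real.sin (k * t) * Real.log (t + Real.sqrt (t ^ 2 - 1)))
      (Set.Ioo c₁ c₂) ∧
    ∫ t in c₁..c₂, Real.cos (k * t) / Real.sqrt (t ^ 2 - 1) =
      Real.cos (k * c₂) * Real.log (c₂ + Real.sqrt (c₂ ^ 2 - 1))
        - Real.cos (k * c₁) * Real.log (c₁ + Real.sqrt (c₁ ^ 2 - 1))
        + k * ∫ t in c₁..c₂, Real.sin (k * t) * Real.log (t + Real.sqrt (t ^ 2 - 1)) := by
  have h2 : 1 ≤ c₂ := h1.trans h12.le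
  -- `Real.arcosh t` is by definition `log (t + √(t ^ 2 - 1))`.
  have hsin_arcosh : ContinuousOn (fun t => sin (k * t) * arcosh t) (Icc c₁ c₂) :=
    (continuous_sin.comp (continuous_const_mul k)).continuousOn.mul
      (continuousOn_arcosh.mono fun _ ht => h1.trans ht.1)
  exact ⟨(intervalIntegrable_cos_mul_div_sqrt_sq_sub_one k h1 h2).1.mono_set Ioo_subset_Ioc_self,
    hsin_arcosh.integrableOn_Icc.mono_set Ioo_subset_Icc_self,
    integral_cos_mul_div_sqrt_sq_sub_one k h1 h2⟩
end
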